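/- For every n ≥ 1, 1/(2·Q_n) ≤ X_1·X_2·⋯·X_n ≤ 1/Q_n, and consequently |(1/n)·log Q_n + (1/n)·Σ_{k=1}^n log X_k| ≤ (log 2)/n. -/

import Mathlib

open Filter Topology

/-- `cfP a n` is the continued fraction numerator `P_{n-1}` of the sequence
`a 1, a 2, …` (so `cfP a 0 = P_{-1} = 1`, `cfP a 1 = P_0 = 0`, and
`P_n = a_n P_{n-1} + P_{n-2}` for `n ≥ 1`). -/
def cfP (a : ℕ → ℕ) : ℕ → ℤ
  | 0 => 1
  | 1 => 0
  | n + 2 => (a (n + 1) : ℤ) * cfP a (n + 1) + cfP a n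

/-- `cfQ a n` is the continued fraction denominator `Q_{n-1}` of the sequence
`a 1, a 2, …` (so `cfQ a 0 = Q_{-1} = 0`, `cfQ a 1 = Q_0 = 1`, and
`Q_n = a_n Q_{n-1} + Q_{n-2}` for `n ≥ 1`). -/
def cfQ (a : ℕ → ℕ) : ℕ → ℤ
  | 0 => 0
  | 1 => 1
  | n + 2 => (a (n + 1) : ℤ) * cfQ a (n + 1) + cfQ a n

/-- The `n`-th convergent `P_n / Q_n = [a_1, …, a_n]`. -/
noncomputable def cfConv (a : ℕ → ℕ) (n : ℕ) : ℝ :=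
  (cfP a (n + 1) : ℝ) / (cfQ a (n + 1) : ℝ)

/-- The sequence `a_k, a_{k+1}, a_{k+2}, …` (the tail of `a` starting at
index `k ≥ 1`), reindexed from `1`. -/
def cfShift (a : ℕ → ℕ) (k : ℕ) : ℕ → ℕ := fun i => a (i + k - 1)

open Finset

/-
The tails satisfy `X k = 1 / (a k + X (k+1))`, i.e. `X k * (a k + X (k+1)) = 1`. Feeding this into
the recurrence `Q_{m+1} = a_{m+1} Q_m + Q_{m-1}` telescopes to
`X_1 ⋯ X_n * (Q_n + Q_{n-1} X_{n+1}) = 1`. Since `0 ≤ X_{n+1} ≤ 1` and `0 ≤ Q_{n-1} ≤ Q_n`, the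
second factor lies between `Q_n` and `2 Q_n`; the logarithmic bound is a rewriting of this.
-/

section Recurrence

variable (a : ℕ → ℕ)

lemma cfP_nonneg : ∀ n, 0 ≤ cfP a n
  | 0 => zero_le_one
  | 1 => le_rfl
  | n + 2 => by
    have := cfP_nonneg n
    have := cfP_nonneg (n + 1)
    rw [cfP]
    positivity

lemma cfQ_nonneg : ∀ n, 0 ≤ cfQ a n
  | 0 => le_rfl
  | 1 => zero_le_one
  | n + 2 => by
    have := cfQ_nonneg n
    have := cfQ_nonneg (n + 1)
    rw [cfQ]
    positivity

lemma cfConv_nonneg (n : ℕ) : 0 ≤ cfConv a n :=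
  div_nonneg (mod_cast cfP_nonneg a _) (mod_cast cfQ_nonneg a _)

lemma eq_cfP_add_cfQ (u : ℕ → ℤ) (hu : ∀ n, u (n + 2) = a (n + 1) * u (n + 1) + u n) :
    ∀ n, u n = u 0 * cfP a n + u 1 * cfQ a n
  | 0 => by simp [cfP, cfQ]
  | 1 => by simp [cfP, cfQ]
  | n + 2 => by
    rw [hu, cfP, cfQ, eq_cfP_add_cfQ u hu n, eq_cfP_add_cfQ u hu (n + 1)]
    ring

lemma cfP_succ_eq_cfQ_tail (n : ℕ) : cfP a (n + 1) = cfQ (fun i => a (i + 1)) n := by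
  simpa [cfP, cfQ] using eq_cfP_add_cfQ (fun i => a (i + 1)) (fun n => cfP a (n + 1)) (fun _ => rfl) n

lemma cfQ_succ_eq_tail (n : ℕ) :
    cfQ a (n + 1) = cfP (fun i => a (i + 1)) n + a 1 * cfQ (fun i => a (i + 1)) n := by
  simpa [cfP, cfQ] using eq_cfP_add_cfQ (fun i => a (i + 1)) (fun n => cfQ a (n + 1)) (fun _ => rfl) n

variable {a} (ha : ∀ k, 1 ≤ k → 1 ≤ a k)
include ha

lemma cfQ_mono : Monotone (cfQ a) := by
  refine monotone_nat_of_le_succ fun n => ?_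
  cases n with
  | zero => exact zero_le_one
  | succ n =>
    have h1 : (1 : ℤ) ≤ a (n + 1) := mod_cast ha (n + 1) n.succ_pos
    have := cfQ_nonneg a (n + 1)
    have := cfQ_nonneg a n
    rw [cfQ]
    nlinarith

lemma one_le_cfQ {n : ℕ} (hn : 1 ≤ n) : 1 ≤ cfQ a n :=
  cfQ_mono ha hn

lemma cfQ_add_mul_mem_Icc (n : ℕ) {x : ℝ} (hx₀ : 0 ≤ x) (hx₁ : x ≤ 1) :
    (cfQ a (n + 1) : ℝ) ≤ cfQ a (n + 1) + cfQ a n * x ∧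
      (cfQ a (n + 1) + cfQ a n * x : ℝ) ≤ 2 * cfQ a (n + 1) := by
  have h₀ : (0 : ℝ) ≤ cfQ a n := mod_cast cfQ_nonneg a n
  have hmono : (cfQ a n : ℝ) ≤ cfQ a (n + 1) := mod_cast cfQ_mono ha n.le_succ
  constructor <;> nlinarith

lemma cfConv_succ_mul_add_cfConv_tail (n : ℕ) :
    cfConv a (n + 1) * (a 1 + cfConv (fun i => a (i + 1)) n) = 1 := by
  have hQ : (1 : ℝ) ≤ cfQ (fun i => a (i + 1)) (n + 1) :=
    mod_cast one_le_cfQ (fun k hk => ha (k + 1) (by omega)) (by omega : 1 ≤ n + 1)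
  have hP : (0 : ℝ) ≤ cfP (fun i => a (i + 1)) (n + 1) := mod_cast cfP_nonneg _ _
  have ha₁ : (1 : ℝ) ≤ a 1 := mod_cast ha 1 le_rfl
  unfold cfConv
  rw [cfP_succ_eq_cfQ_tail a (n + 1), cfQ_succ_eq_tail a (n + 1)]
  push_cast
  field_simp
  ring

lemma mul_add_eq_one_of_tendsto_cfConv {x y : ℝ} (hx : Tendsto (cfConv a) atTop (𝓝 x))
    (hy : Tendsto (cfConv (fun i => a (i + 1))) atTop (𝓝 y)) : x * (a 1 + y) = 1 := by
  have hlim := (hx.comp (tendsto_add_atTop_nat 1)).mul ((tendsto_const_nhds (x := (a 1 : ℝ))).add hy)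
  simp only [Function.comp_def, cfConv_succ_mul_add_cfConv_tail ha] at hlim
  exact tendsto_nhds_unique hlim tendsto_const_nhds

end Recurrence

lemma prod_mul_cfQ_add_eq_one (a : ℕ → ℕ) (X : ℕ → ℝ)
    (hX : ∀ k, 1 ≤ k → X k * (a k + X (k + 1)) = 1) :
    ∀ m, (∏ k ∈ Icc 1 m, X k) * (cfQ a (m + 1) + cfQ a m * X (m + 1)) = 1
  | 0 => by simp [cfQ]
  | m + 1 => by
    have hstep : X (m + 1) * (cfQ a (m + 2) + cfQ a (m + 1) * X (m + 2)) =
        cfQ a (m + 1) + cfQ a m * X (m + 1) := by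
      rw [cfQ]
      push_cast
      linear_combination (cfQ a (m + 1) : ℝ) * hX (m + 1) m.succ_pos
    rw [prod_Icc_succ_top (by omega), mul_assoc, hstep, prod_mul_cfQ_add_eq_one a X hX m]

section Tails

lemma cfShift_one (a : ℕ → ℕ) (k : ℕ) : cfShift a k 1 = a k := by
  simp [cfShift]

lemma cfShift_tail (a : ℕ → ℕ) (k : ℕ) : (fun i => cfShift a k (i + 1)) = cfShift a (k + 1) := by
  funext i
  simp only [cfShift]
  congr 1
  omega

variable {a : ℕ → ℕ} {X : ℕ → ℝ} (ha : ∀ k, 1 ≤ k → 1 ≤ a k)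
  (hX : ∀ k, 1 ≤ k → Tendsto (cfConv (cfShift a k)) atTop (𝓝 (X k)))

include hX in
lemma cfTail_nonneg {k : ℕ} (hk : 1 ≤ k) : 0 ≤ X k :=
  ge_of_tendsto' (hX k hk) (cfConv_nonneg _)

include ha hX

lemma cfTail_mul_add_eq_one {k : ℕ} (hk : 1 ≤ k) : X k * (a k + X (k + 1)) = 1 := by
  have h := mul_add_eq_one_of_tendsto_cfConv (a := cfShift a k) (fun i hi => ha _ (by omega))
    (hX k hk) (by rw [cfShift_tail]; exact hX (k + 1) (by omega))
  rwa [cfShift_one] at h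

lemma cfTail_pos {k : ℕ} (hk : 1 ≤ k) : 0 < X k := by
  have hrec := cfTail_mul_add_eq_one ha hX hk
  have hsucc : 0 ≤ X (k + 1) := cfTail_nonneg hX (by omega)
  have hak : (1 : ℝ) ≤ a k := mod_cast ha k hk
  nlinarith [cfTail_nonneg hX hk]

lemma cfTail_le_one {k : ℕ} (hk : 1 ≤ k) : X k ≤ 1 := by
  have hrec := cfTail_mul_add_eq_one ha hX hk
  have hsucc : 0 ≤ X (k + 1) := cfTail_nonneg hX (by omega)
  have hak : (1 : ℝ) ≤ a k := mod_cast ha k hk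
  nlinarith [cfTail_nonneg hX hk]

end Tails

lemma one_div_two_mul_le_and_le_one_div {p d q : ℝ} (hpd : p * d = 1) (hq : 0 < q)
    (hqd : q ≤ d) (hdq : d ≤ 2 * q) : 1 / (2 * q) ≤ p ∧ p ≤ 1 / q := by
  rw [eq_one_div_of_mul_eq_one_left hpd]
  exact ⟨one_div_le_one_div_of_le (hq.trans_le hqd) hdq, one_div_le_one_div_of_le hq hqd⟩

lemma abs_log_add_log_le_log_two {p q : ℝ} (hq : 0 < q) (hp₁ : 1 / (2 * q) ≤ p)
    (hp₂ : p ≤ 1 / q) : |Real.log q + Real.log p| ≤ Real.log 2 := by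
  have hp : 0 < p := lt_of_lt_of_le (by positivity) hp₁
  have hqp₁ : 1 / 2 ≤ q * p := by
    rw [div_le_iff₀' (by positivity)] at hp₁
    rw [div_le_iff₀ two_pos]
    linarith
  have hqp₂ : q * p ≤ 1 := by rwa [le_div_iff₀' hq] at hp₂
  rw [← Real.log_mul hq.ne' hp.ne', abs_le]
  constructor
  · simpa [one_div, Real.log_inv] using Real.log_le_log (by norm_num) hqp₁
  · exact (Real.log_nonpos (by positivity) hqp₂).trans (Real.log_nonneg one_le_two)

theorem cf_product_bounds_general (a : ℕ → ℕ) (ha : ∀ k, 1 ≤ k → 1 ≤ a k)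
    (X : ℕ → ℝ)
    (hX : ∀ k, 1 ≤ k → Tendsto (cfConv (cfShift a k)) atTop (𝓝 (X k)))
    (n : ℕ) :
    1 / (2 * (cfQ a (n + 1) : ℝ)) ≤ (∏ k ∈ Finset.Icc 1 n, X k) ∧
    (∏ k ∈ Finset.Icc 1 n, X k) ≤ 1 / (cfQ a (n + 1) : ℝ) ∧
    |(1 / (n : ℝ)) * Real.log ((cfQ a (n + 1) : ℝ)) +
        (1 / (n : ℝ)) * ∑ k ∈ Finset.Icc 1 n, Real.log (X k)| ≤
      Real.log 2 / n := by
  have hn₁ : 1 ≤ n + 1 := Nat.le_add_left 1 n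
  have hQ : (0 : ℝ) < cfQ a (n + 1) := zero_lt_one.trans_le (mod_cast one_le_cfQ ha hn₁)
  obtain ⟨hQD, hDQ⟩ := cfQ_add_mul_mem_Icc ha n (cfTail_nonneg hX hn₁) (cfTail_le_one ha hX hn₁)
  obtain ⟨hlow, hhigh⟩ := one_div_two_mul_le_and_le_one_div
    (prod_mul_cfQ_add_eq_one a X (fun k hk => cfTail_mul_add_eq_one ha hX hk) n) hQ hQD hDQ
  refine ⟨hlow, hhigh, ?_⟩
  have hlog := abs_log_add_log_le_log_two hQ hlow hhigh
  rw [Real.log_prod fun k hk => (cfTail_pos ha hX (mem_Icc.1 hk).1).ne'] at hlog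
  rw [← mul_add, abs_mul, abs_of_nonneg (by positivity), one_div_mul_eq_div]
  exact div_le_div_of_nonneg_right hlog n.cast_nonneg

/-- For every `n ≥ 1`, `1/(2 Q_n) ≤ X_1 X_2 ⋯ X_n ≤ 1/Q_n`, and consequently
`|(1/n) log Q_n + (1/n) ∑_{k=1}^n log X_k| ≤ (log 2)/n`, where `X k` is the
value of the infinite continued fraction `[a_k, a_{k+1}, …]`. -/
theorem cf_product_bounds (a : ℕ → ℕ) (ha : ∀ k, 1 ≤ k → 1 ≤ a k)
    (X : ℕ → ℝ)
    (hX : ∀ k, 1 ≤ k → Tendsto (cfConv (cfShift a k)) atTop (𝓝 (X k)))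
    (n : ℕ) (hn : 1 ≤ n) :
    1 / (2 * (cfQ a (n + 1) : ℝ)) ≤ (∏ k ∈ Finset.Icc 1 n, X k) ∧
    (∏ k ∈ Finset.Icc 1 n, X k) ≤ 1 / (cfQ a (n + 1) : ℝ) ∧
    |(1 / (n : ℝ)) * Real.log ((cfQ a (n + 1) : ℝ)) +
        (1 / (n : ℝ)) * ∑ k ∈ Finset.Icc 1 n, Real.log (X k)| ≤
      Real.log 2 / n :=
  cf_product_bounds_general a ha X hX n
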